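/- arXiv:2203.12386 — 2 statements merged into one kernel-verified Lean document; each statement's English description precedes it below -/
import Mathlib

section
/- Let (X,d) be a dissimilarity space that is conical with apex p (d(p,x) = δ > 0 for all x ∈ X \ {p}), let X' = X \ {p}, let <' be a compatible order of (X',d) with minimum x_* and maximum x^*. Then the total order on X obtained by placing p after x^* (or, equivalently, the one obtained by placing p before x_*), keeping <' on X', is a compatible order of (X,d) if and only if d(x_*, x^*) ≤ δ. Moreover, if d(x_*, x^*) ≤ δ, then for a pair (y,z) of consecutive elements of <' with y <' z, the order obtained by inserting p between y and z is compatible if and only if d(y,z) = δ. -/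
/-!
Since the apex is at distance `δ` from every other point, a triple through `p` is compatible
exactly when the two points of `X'` in it are at distance `≤ δ` if they lie on the same side of
`p`, and `≥ δ` if `p` separates them. By compatibility of `<'`, the largest distance between
`<'`-ordered points is `d(x_*, x^*)`, and the smallest distance across the hole after `y` is
`d(y, z)`; hence both criteria.
-/

def IsCompatible {X : Type*} (d : X → X → ℝ) (lt : X → X → Prop) : Prop :=
  ∀ x y z : X, lt x y → lt y z → max (d x y) (d y z) ≤ d x z

/-- Inserting `p` in the hole just after `y` (before the successor of `y`). -/
def insertOrder {X : Type*} (p : X)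
    (lt' : {x : X // x ≠ p} → {x : X // x ≠ p} → Prop)
    (y : {x : X // x ≠ p}) : X → X → Prop :=
  fun u v =>
    (∃ hv : v ≠ p, u = p ∧ lt' y ⟨v, hv⟩) ∨
    (∃ hu : u ≠ p, v = p ∧ ¬ lt' y ⟨u, hu⟩) ∨
    (∃ hu : u ≠ p, ∃ hv : v ≠ p, lt' ⟨u, hu⟩ ⟨v, hv⟩)

/-- The total order on `X` obtained by placing `p` after all elements of
`X' = X \ {p}`, keeping `lt'` on `X'`. -/
def endOrder {X : Type*} (p : X)
    (lt' : {x : X // x ≠ p} → {x : X // x ≠ p} → Prop) : X → X → Prop :=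
  fun u v =>
    (∃ _ : u ≠ p, v = p) ∨
    (∃ hu : u ≠ p, ∃ hv : v ≠ p, lt' ⟨u, hu⟩ ⟨v, hv⟩)

section CompatibleOrder

variable {α : Type*} {D : α → α → ℝ} {r : α → α → Prop}

theorem IsCompatible.le_of_between [IsTrans α r] (hD : IsCompatible D r) {a u v b : α}
    (hau : r a u ∨ a = u) (huv : r u v) (hvb : r v b ∨ v = b) : D u v ≤ D a b := by
  have hub : D u v ≤ D u b := by
    rcases hvb with hvb | rfl
    · exact (le_max_left _ _).trans (hD u v b huv hvb)
    · exact le_rfl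
  rcases hau with hau | rfl
  · have hub' : r u b := by
      rcases hvb with hvb | rfl
      · exact _root_.trans huv hvb
      · exact huv
    exact hub.trans ((le_max_right _ _).trans (hD a u b hau hub'))
  · exact hub

theorem rel_or_eq_of_not_rel [Std.Trichotomous r] {a b : α} (h : ¬ r b a) : r a b ∨ a = b :=
  (trichotomous_of r a b).imp_right fun h' => h'.resolve_right h

theorem IsCompatible.forall_rel_le_iff [IsTrans α r] [Std.Trichotomous r] (hD : IsCompatible D r)
    (hself : ∀ a, D a a = 0) {amin amax : α} (hmin : ∀ a, ¬ r a amin) (hmax : ∀ a, ¬ r amax a)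
    {c : ℝ} (hc : 0 ≤ c) : (∀ u v, r u v → D u v ≤ c) ↔ D amin amax ≤ c := by
  refine ⟨fun h => ?_, fun h u v huv => ?_⟩
  · rcases rel_or_eq_of_not_rel (hmax amin) with hlt | rfl
    · exact h _ _ hlt
    · rwa [hself]
  · exact (hD.le_of_between (rel_or_eq_of_not_rel (hmin u)) huv
      (rel_or_eq_of_not_rel (hmax v))).trans h

theorem IsCompatible.forall_across_le_iff [IsStrictTotalOrder α r] (hD : IsCompatible D r)
    {y z : α} (hyz : r y z) (hcons : ∀ w, ¬ (r y w ∧ r w z)) {c : ℝ} :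
    (∀ u w, ¬ r y u → r y w → c ≤ D u w) ↔ c ≤ D y z := by
  refine ⟨fun h => h y z (irrefl y) hyz, fun h u w hu hw => h.trans ?_⟩
  have hzw : r z w ∨ z = w := rel_or_eq_of_not_rel fun hwz => hcons w ⟨hw, hwz⟩
  exact hD.le_of_between (rel_or_eq_of_not_rel hu) hyz hzw

end CompatibleOrder

section Conical

variable {X : Type*} {d : X → X → ℝ} {p : X} {δ : ℝ}
  {lt' : {x : X // x ≠ p} → {x : X // x ≠ p} → Prop}

theorem isCompatible_endOrder_iff (hsymm : ∀ x y : X, d x y = d y x)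
    (hconical : ∀ x : X, x ≠ p → d p x = δ)
    (hcomp : IsCompatible (fun u v : {x : X // x ≠ p} => d u v) lt') :
    IsCompatible d (endOrder p lt') ↔ ∀ u v, lt' u v → d u v ≤ δ := by
  have hconical' : ∀ x : X, x ≠ p → d x p = δ := fun x hx => (hsymm x p).trans (hconical x hx)
  refine ⟨fun h u v huv => ?_, fun h x y z hxy hyz => ?_⟩
  · have := h u v p (.inr ⟨u.2, v.2, huv⟩) (.inl ⟨v.2, rfl⟩)
    rw [hconical' u u.2] at this
    exact le_of_max_le_left this
  · rcases hxy with ⟨-, rfl⟩ | ⟨hx, hy, hxy⟩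
    · rcases hyz with ⟨hy, -⟩ | ⟨hy, -⟩ <;> exact (hy rfl).elim
    rcases hyz with ⟨-, rfl⟩ | ⟨_, hz, hyz⟩
    · rw [hconical' x hx, hconical' y hy]
      exact max_le (h _ _ hxy) le_rfl
    · exact hcomp _ _ ⟨z, hz⟩ hxy hyz

theorem isCompatible_insertOrder_iff (hsymm : ∀ x y : X, d x y = d y x)
    (hconical : ∀ x : X, x ≠ p → d p x = δ)
    (hcomp : IsCompatible (fun u v : {x : X // x ≠ p} => d u v) lt')
    (hbound : ∀ u v, lt' u v → d u v ≤ δ) (y : {x : X // x ≠ p}) :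
    IsCompatible d (insertOrder p lt' y) ↔ ∀ u w, ¬ lt' y u → lt' y w → δ ≤ d u w := by
  have hconical' : ∀ x : X, x ≠ p → d x p = δ := fun x hx => (hsymm x p).trans (hconical x hx)
  refine ⟨fun h u w hu hw => ?_, fun h x v w hxv hvw => ?_⟩
  · have := h u p w (.inr (.inl ⟨u.2, rfl, hu⟩)) (.inl ⟨w.2, rfl, hw⟩)
    rwa [hconical' u u.2, hconical w w.2, max_self] at this
  rcases hxv with ⟨hv, rfl, hyv⟩ | ⟨hx, rfl, hyx⟩ | ⟨hx, hv, hxv⟩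
  · rcases hvw with ⟨-, rfl, -⟩ | ⟨_, -, hyv'⟩ | ⟨_, hw, hvw⟩
    · exact (hv rfl).elim
    · exact (hyv' hyv).elim
    · rw [hconical v hv, hconical w hw]
      exact max_le le_rfl (hbound _ _ hvw)
  · rcases hvw with ⟨hw, -, hyw⟩ | ⟨hv, -⟩ | ⟨hv, -⟩
    · rw [hconical' x hx, hconical w hw, max_self]
      exact h ⟨x, hx⟩ ⟨w, hw⟩ hyx hyw
    all_goals exact (hv rfl).elim
  · rcases hvw with ⟨-, rfl, -⟩ | ⟨-, rfl, -⟩ | ⟨_, hw, hvw⟩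
    · exact (hv rfl).elim
    · rw [hconical' x hx, hconical' v hv]
      exact max_le (hbound _ _ hxv) le_rfl
    · exact hcomp _ _ ⟨w, hw⟩ hxv hvw

end Conical

theorem extreme_hole_admissible_general {X : Type*} (d : X → X → ℝ)
    (hsymm : ∀ x y : X, d x y = d y x)
    (hself : ∀ x : X, d x x = 0)
    (p : X) (δ : ℝ) (hδpos : 0 < δ)
    (hconical : ∀ x : X, x ≠ p → d p x = δ)
    (lt' : {x : X // x ≠ p} → {x : X // x ≠ p} → Prop)
    (hsto : IsStrictTotalOrder {x : X // x ≠ p} lt')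
    (hcomp : ∀ u v w : {x : X // x ≠ p}, lt' u v → lt' v w →
      max (d u.1 v.1) (d v.1 w.1) ≤ d u.1 w.1)
    (xmin xmax : {x : X // x ≠ p})
    (hmin : ∀ w : {x : X // x ≠ p}, ¬ lt' w xmin)
    (hmax : ∀ w : {x : X // x ≠ p}, ¬ lt' xmax w) :
    (IsCompatible d (endOrder p lt') ↔ d xmin.1 xmax.1 ≤ δ) ∧
    (d xmin.1 xmax.1 ≤ δ →
      ∀ y z : {x : X // x ≠ p}, lt' y z →
        (∀ w : {x : X // x ≠ p}, ¬ (lt' y w ∧ lt' w z)) →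
        (IsCompatible d (insertOrder p lt' y) ↔ d y.1 z.1 = δ)) := by
  have := hsto
  have hcomp' : IsCompatible (fun u v : {x : X // x ≠ p} => d u v) lt' := hcomp
  have hbound : (∀ u v, lt' u v → d u v ≤ δ) ↔ d xmin.1 xmax.1 ≤ δ :=
    hcomp'.forall_rel_le_iff (fun u => hself u) hmin hmax hδpos.le
  refine ⟨(isCompatible_endOrder_iff hsymm hconical hcomp').trans hbound,
    fun hle y z hyz hcons => ?_⟩
  rw [isCompatible_insertOrder_iff hsymm hconical hcomp' (hbound.2 hle),
    hcomp'.forall_across_le_iff hyz hcons]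
  exact ⟨fun h => (hbound.2 hle y z hyz).antisymm h, fun h => h.ge⟩

/-- in a conical space with apex `p`, for a compatible order `<'` of
`X' = X \ {p}` with minimum `x_*` and maximum `x^*`, placing `p` after `x^*` gives a
compatible order of `(X,d)` iff `d(x_*,x^*) ≤ δ`; moreover, if `d(x_*,x^*) ≤ δ`, then
inserting `p` between consecutive `y <' z` gives a compatible order iff `d(y,z) = δ`. -/
theorem extreme_hole_admissible {X : Type*} [Fintype X] (d : X → X → ℝ)
    (hsymm : ∀ x y : X, d x y = d y x)
    (hnonneg : ∀ x y : X, 0 ≤ d x y)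
    (hself : ∀ x : X, d x x = 0)
    (p : X) (δ : ℝ) (hδpos : 0 < δ)
    (hconical : ∀ x : X, x ≠ p → d p x = δ)
    (lt' : {x : X // x ≠ p} → {x : X // x ≠ p} → Prop)
    (hsto : IsStrictTotalOrder {x : X // x ≠ p} lt')
    (hcomp : ∀ u v w : {x : X // x ≠ p}, lt' u v → lt' v w →
      max (d u.1 v.1) (d v.1 w.1) ≤ d u.1 w.1)
    (xmin xmax : {x : X // x ≠ p})
    (hmin : ∀ w : {x : X // x ≠ p}, ¬ lt' w xmin)
    (hmax : ∀ w : {x : X // x ≠ p}, ¬ lt' xmax w) :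
    (IsCompatible d (endOrder p lt') ↔ d xmin.1 xmax.1 ≤ δ) ∧
    (d xmin.1 xmax.1 ≤ δ →
      ∀ y z : {x : X // x ≠ p}, lt' y z →
        (∀ w : {x : X // x ≠ p}, ¬ (lt' y w ∧ lt' w z)) →
        (IsCompatible d (insertOrder p lt' y) ↔ d y.1 z.1 = δ)) :=
  extreme_hole_admissible_general d hsymm hself p δ hδpos hconical lt' hsto hcomp xmin xmax hmin
    hmax
end

section
/- Let (X,d) be a Robinson space and p ∈ X. Then there exists a compatible order < of (X,d) such that: every copoint C at p with diam(C) ≤ δ_C (where δ_C = d(p,x) for x ∈ C) is an interval of < located entirely to the left or entirely to the right of p; and every copoint C at p with diam(C) > δ_C defines two sets C^l = {u ∈ C : u < p} and C^r = {u ∈ C : p < u}, both of which are intervals of < with C^l < p < C^r. -/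
def IsMmodule {X : Type*} (d : X → X → ℝ) (M : Set X) : Prop :=
  ∀ z ∉ M, ∀ x ∈ M, ∀ y ∈ M, d z x = d z y

def IsCopoint {X : Type*} (d : X → X → ℝ) (p : X) (C : Set X) : Prop :=
  IsMmodule d C ∧ p ∉ C ∧
    ∀ M : Set X, IsMmodule d M → p ∉ M → C ⊆ M → M = C

def IsInterval {X : Type*} (lt : X → X → Prop) (I : Set X) : Prop :=
  ∀ x ∈ I, ∀ z ∈ I, ∀ y : X, lt x y → lt y z → y ∈ I

/-!
The segment between two points of a copoint `C` at `p` can be added to `C` without destroying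
the mmodule property, so by maximality `C` is order-convex as long as `p` does not separate the
two points. Hence `C ∩ (-∞, p)` and `C ∩ (p, ∞)` are always intervals, and `C` itself is one as
soon as it lies on one side of `p`.

It remains to find a compatible order in which no copoint `C` with `diam C ≤ δ_C` straddles `p`.
If one does, let `a` be the last element of `C` before `p` and move the block `C ∩ (p, ∞)` to
just after `a`. Everything the block jumps over lies outside `C` and sees `C` at distance at
least `δ_C ≥ diam C`, so the new order is still compatible. Only elements of `C` change side
with respect to `p`, and copoints at `p` are pairwise disjoint, so the number of straddling small
copoints drops; an order minimising it is the one we want.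
-/

section Robinson

variable {X : Type*} {d : X → X → ℝ} {lt : X → X → Prop} {p : X} {C : Set X}

theorem IsCompatible.dist_le_left (hcomp : IsCompatible d lt) {x y z : X} (hxy : lt x y)
    (hyz : lt y z) : d x y ≤ d x z :=
  (le_max_left _ _).trans (hcomp x y z hxy hyz)

theorem IsCompatible.dist_le_right (hcomp : IsCompatible d lt) {x y z : X} (hxy : lt x y)
    (hyz : lt y z) : d y z ≤ d x z :=
  (le_max_right _ _).trans (hcomp x y z hxy hyz)

theorem exists_forall_not_lt_of_finite [Finite X] [IsStrictTotalOrder X lt] {S : Set X}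
    (hS : S.Nonempty) : ∃ a ∈ S, ∀ b ∈ S, ¬ lt a b :=
  (Finite.wellFounded_of_trans_of_irrefl (Function.swap lt)).has_min S hS

theorem lt_of_not_lt_of_ne [IsStrictTotalOrder X lt] {x y : X} (h : ¬ lt y x)
    (hne : x ≠ y) : lt x y := by
  rcases trichotomous_of lt x y with hxy | rfl | hyx
  exacts [hxy, absurd rfl hne, absurd hyx h]

theorem lt_of_not_lt_of_lt [IsStrictTotalOrder X lt] {x y z : X} (hxy : ¬ lt y x)
    (hyz : lt y z) : lt x z := by
  rcases trichotomous_of lt x y with hxy' | rfl | hyx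
  exacts [trans_of lt hxy' hyz, hyz, absurd hyx hxy]

theorem isMmodule_of_forall_eq {M : Set X} (w : X) (h : ∀ z ∉ M, ∀ u ∈ M, d z u = d z w) :
    IsMmodule d M :=
  fun z hz x hx y hy => (h z hz x hx).trans (h z hz y hy).symm

theorem IsMmodule.union {M N : Set X} (hM : IsMmodule d M) (hN : IsMmodule d N) {w : X}
    (hwM : w ∈ M) (hwN : w ∈ N) : IsMmodule d (M ∪ N) := by
  refine isMmodule_of_forall_eq w fun z hz u hu => ?_
  rcases hu with hu | hu
  · exact hM z (fun h => hz (.inl h)) u hu w hwM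
  · exact hN z (fun h => hz (.inr h)) u hu w hwN

theorem IsMmodule.union_between [IsStrictTotalOrder X lt] (hsymm : ∀ x y : X, d x y = d y x)
    (hcomp : IsCompatible d lt) {M : Set X} (hM : IsMmodule d M) {x z : X} (hx : x ∈ M)
    (hz : z ∈ M) : IsMmodule d (M ∪ {v | lt x v ∧ lt v z}) := by
  refine isMmodule_of_forall_eq x fun w hw u hu => ?_
  have hwM : w ∉ M := fun h => hw (.inl h)
  have hwz : d w z = d w x := hM w hwM z hz x hx
  rcases hu with hu | ⟨hxu, huz⟩
  · exact hM w hwM u hu x hx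
  rcases trichotomous_of lt w x with hwx | rfl | hxw
  · exact le_antisymm (hwz ▸ hcomp.dist_le_left (trans_of lt hwx hxu) huz)
      (hcomp.dist_le_left hwx hxu)
  · exact absurd hx hwM
  rcases trichotomous_of lt w z with hwz' | rfl | hzw
  · exact absurd (.inr ⟨hxw, hwz'⟩) hw
  · exact absurd hz hwM
  have hle := hcomp.dist_le_right huz hzw
  rw [hsymm z w, hwz, hsymm w x] at hle
  rw [hsymm w u, hsymm w x]
  exact le_antisymm (hcomp.dist_le_right hxu (trans_of lt huz hzw)) hle

theorem IsCopoint.eq_of_mem {D : Set X} (hC : IsCopoint d p C) (hD : IsCopoint d p D) {w : X}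
    (hwC : w ∈ C) (hwD : w ∈ D) : C = D := by
  have hU := hC.1.union hD.1 hwC hwD
  have hpU : p ∉ C ∪ D := by rintro (h | h); exacts [hC.2.1 h, hD.2.1 h]
  exact (hC.2.2 _ hU hpU Set.subset_union_left).symm.trans (hD.2.2 _ hU hpU Set.subset_union_right)

theorem IsCopoint.mem_of_lt_of_lt [IsStrictTotalOrder X lt] (hsymm : ∀ x y : X, d x y = d y x)
    (hcomp : IsCompatible d lt) (hC : IsCopoint d p C) {x y z : X} (hx : x ∈ C) (hz : z ∈ C)
    (hxy : lt x y) (hyz : lt y z) (hp : ¬ (lt x p ∧ lt p z)) : y ∈ C := by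
  have hpU : p ∉ C ∪ {v | lt x v ∧ lt v z} := by rintro (h | h); exacts [hC.2.1 h, hp h]
  rw [← hC.2.2 _ (hC.1.union_between hsymm hcomp hx hz) hpU Set.subset_union_left]
  exact .inr ⟨hxy, hyz⟩

theorem IsCopoint.isInterval_of_side [IsStrictTotalOrder X lt] (hsymm : ∀ x y : X, d x y = d y x)
    (hcomp : IsCompatible d lt) (hC : IsCopoint d p C)
    (hside : (∀ u ∈ C, lt u p) ∨ (∀ u ∈ C, lt p u)) : IsInterval lt C := by
  refine fun x hx z hz y hxy hyz => hC.mem_of_lt_of_lt hsymm hcomp hx hz hxy hyz fun h => ?_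
  rcases hside with hs | hs
  exacts [asymm_of lt (hs z hz) h.2, asymm_of lt (hs x hx) h.1]

theorem IsCopoint.isInterval_left [IsStrictTotalOrder X lt] (hsymm : ∀ x y : X, d x y = d y x)
    (hcomp : IsCompatible d lt) (hC : IsCopoint d p C) : IsInterval lt {u ∈ C | lt u p} :=
  fun _ hx _ hz _ hxy hyz =>
    ⟨hC.mem_of_lt_of_lt hsymm hcomp hx.1 hz.1 hxy hyz fun h => asymm_of lt hz.2 h.2,
      trans_of lt hyz hz.2⟩

theorem IsCopoint.isInterval_right [IsStrictTotalOrder X lt] (hsymm : ∀ x y : X, d x y = d y x)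
    (hcomp : IsCompatible d lt) (hC : IsCopoint d p C) : IsInterval lt {u ∈ C | lt p u} :=
  fun _ hx _ hz _ hxy hyz =>
    ⟨hC.mem_of_lt_of_lt hsymm hcomp hx.1 hz.1 hxy hyz fun h => asymm_of lt hx.2 h.1,
      trans_of lt hx.2 hxy⟩

def Straddles (lt : X → X → Prop) (p : X) (C : Set X) : Prop :=
  (∃ u ∈ C, lt u p) ∧ ∃ u ∈ C, lt p u

theorem forall_lt_or_forall_gt_of_not_straddles [IsStrictTotalOrder X lt] (hpC : p ∉ C)
    (h : ¬ Straddles lt p C) : (∀ u ∈ C, lt u p) ∨ (∀ u ∈ C, lt p u) := by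
  have hne : ∀ u ∈ C, u ≠ p := fun u hu hup => hpC (hup ▸ hu)
  by_cases hl : ∃ u ∈ C, lt u p
  · exact .inl fun u hu => lt_of_not_lt_of_ne (fun hpu => h ⟨hl, u, hu, hpu⟩) (hne u hu)
  · simp only [not_exists, not_and] at hl
    exact .inr fun u hu => lt_of_not_lt_of_ne (hl u hu) (hne u hu).symm

/-- `lt` with the block `R` taken out and reinserted right after `a`. -/
def moveAfter (lt : X → X → Prop) (R : Set X) (a : X) (x y : X) : Prop :=
  (x ∉ R ∧ y ∉ R ∧ lt x y) ∨ (x ∈ R ∧ y ∈ R ∧ lt x y) ∨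
    (x ∈ R ∧ y ∉ R ∧ lt a y) ∨ (x ∉ R ∧ y ∈ R ∧ ¬ lt a x)

theorem moveAfter_iff_of_notMem {R : Set X} {a x y : X} (hx : x ∉ R) (hy : y ∉ R) :
    moveAfter lt R a x y ↔ lt x y := by
  simp [moveAfter, hx, hy]

theorem isStrictTotalOrder_moveAfter [IsStrictTotalOrder X lt] (R : Set X) (a : X) :
    IsStrictTotalOrder X (moveAfter lt R a) where
  trichotomous x y hxy hyx := by
    by_cases hx : x ∈ R <;> by_cases hy : y ∈ R <;>
      simp only [moveAfter, hx, hy, not_true, not_false_eq_true, true_and, false_and,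
        and_false, or_false, false_or, not_not] at hxy hyx
    · exact Std.Trichotomous.trichotomous x y hxy hyx
    · exact absurd hyx hxy
    · exact absurd hxy hyx
    · exact Std.Trichotomous.trichotomous x y hxy hyx
  irrefl x h := by
    rcases h with ⟨-, -, h⟩ | ⟨-, -, h⟩ | ⟨h, h', -⟩ | ⟨h, h', -⟩
    exacts [irrefl_of lt x h, irrefl_of lt x h, h' h, h h']
  trans x y z hxy hyz := by
    by_cases hx : x ∈ R <;> by_cases hy : y ∈ R <;> by_cases hz : z ∈ R <;>
      simp only [moveAfter, hx, hy, hz, not_true, not_false_eq_true, true_and, false_and,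
        and_false, or_false, false_or] at hxy hyz ⊢
    · exact trans_of lt hxy hyz
    · exact hyz
    · exact absurd hxy hyz
    · exact trans_of lt hxy hyz
    · exact hxy
    · exact lt_of_not_lt_of_lt hxy hyz
    · exact fun hax => hyz (trans_of lt hax hxy)
    · exact trans_of lt hxy hyz

theorem isCompatible_moveAfter [IsStrictTotalOrder X lt] (hsymm : ∀ x y : X, d x y = d y x)
    (hcomp : IsCompatible d lt) (hC : IsMmodule d C) (hpC : p ∉ C) {δ : ℝ}
    (hδ : ∀ c ∈ C, d p c = δ) (hdiam : ∀ x ∈ C, ∀ y ∈ C, d x y ≤ δ) {a : X} (ha : a ∈ C)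
    (hap : lt a p) (hamax : ∀ c ∈ C, lt c p → ¬ lt a c) :
    IsCompatible d (moveAfter lt {c ∈ C | lt p c} a) := by
  set R := {c ∈ C | lt p c}
  have hout : ∀ y, lt a y → y ∉ R → y ∉ C := by
    intro y hay hyR hyC
    rcases trichotomous_of lt y p with hyp | rfl | hpy
    exacts [hamax y hyC hyp hay, hpC hyC, hyR ⟨hyC, hpy⟩]
  have hmod : ∀ z ∉ C, ∀ c ∈ C, d c z = d a z := fun z hz c hc => by
    rw [hsymm c, hsymm a]; exact hC z hz c hc a ha
  have hfar : ∀ z ∉ C, ∀ r ∈ R, δ ≤ d a z := by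
    intro z hz r hr
    rcases trichotomous_of lt z p with hzp | rfl | hpz
    · rw [← hmod z hz r hr.1, hsymm r z, ← hδ r hr.1]
      exact hcomp.dist_le_right hzp hr.2
    · rw [hsymm, hδ a ha]
    · rw [← hδ a ha, hsymm p a]
      exact hcomp.dist_le_left hap hpz
  intro x y z hxy hyz
  by_cases hx : x ∈ R <;> by_cases hy : y ∈ R <;> by_cases hz : z ∈ R <;>
    simp only [moveAfter, hx, hy, hz, not_true, not_false_eq_true, true_and, false_and,
      and_false, or_false, false_or] at hxy hyz
  · exact hcomp x y z hxy hyz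
  · have hzC := hout z hyz hz
    rw [hmod z hzC y hy.1, hmod z hzC x hx.1]
    exact max_le ((hdiam x hx.1 y hy.1).trans (hfar z hzC y hy)) le_rfl
  · exact absurd hxy hyz
  · have hyC := hout y hxy hy
    rw [hmod y hyC x hx.1, hmod z (hout z (trans_of lt hxy hyz) hz) x hx.1]
    exact hcomp a y z hxy hyz
  · exact hcomp x y z (lt_of_not_lt_of_lt hxy (trans_of lt hap hy.2)) hyz
  · have hzC := hout z hyz hz
    rw [hmod z hzC y hy.1]
    by_cases hxC : x ∈ C
    · rw [hmod z hzC x hxC]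
      exact max_le ((hdiam x hxC y hy.1).trans (hfar z hzC y hy)) le_rfl
    · rw [hC x hxC y hy.1 a ha]
      exact hcomp x a z (lt_of_not_lt_of_ne hxy fun h => hxC (h ▸ ha)) hyz
  · exact hcomp x y z hxy (lt_of_not_lt_of_lt hyz (trans_of lt hap hz.2))
  · exact hcomp x y z hxy hyz

theorem IsMmodule.exists_compatible_shift_left [Finite X] [IsStrictTotalOrder X lt]
    (hsymm : ∀ x y : X, d x y = d y x) (hcomp : IsCompatible d lt) (hC : IsMmodule d C)
    (hpC : p ∉ C) {δ : ℝ} (hδ : ∀ c ∈ C, d p c = δ) (hdiam : ∀ x ∈ C, ∀ y ∈ C, d x y ≤ δ)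
    (hleft : ∃ c ∈ C, lt c p) :
    ∃ lt' : X → X → Prop, IsStrictTotalOrder X lt' ∧ IsCompatible d lt' ∧
      (∀ c ∈ C, lt' c p) ∧ ∀ x ∉ C, (lt' x p ↔ lt x p) ∧ (lt' p x ↔ lt p x) := by
  obtain ⟨a, ⟨ha, hap⟩, hamax⟩ := exists_forall_not_lt_of_finite (lt := lt) hleft
  have hpR : p ∉ {c ∈ C | lt p c} := fun h => hpC h.1
  refine ⟨moveAfter lt {c ∈ C | lt p c} a, isStrictTotalOrder_moveAfter _ _,
    isCompatible_moveAfter hsymm hcomp hC hpC hδ hdiam ha hap fun c hc hcp => hamax c ⟨hc, hcp⟩,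
    fun c hc => ?_, fun x hx => ?_⟩
  · by_cases hpc : lt p c
    · exact .inr (.inr (.inl ⟨⟨hc, hpc⟩, hpR, hap⟩))
    · refine .inl ⟨fun h => hpc h.2, hpR, ?_⟩
      exact lt_of_not_lt_of_ne hpc fun h => hpC (h ▸ hc)
  · have hxR : x ∉ {c ∈ C | lt p c} := fun h => hx h.1
    exact ⟨moveAfter_iff_of_notMem hxR hpR, moveAfter_iff_of_notMem hpR hxR⟩

def straddlingSmallCopoints (d : X → X → ℝ) (lt : X → X → Prop) (p : X) : Set (Set X) :=
  {C | IsCopoint d p C ∧ (∀ x ∈ C, ∀ y ∈ C, d x y ≤ d p x) ∧ Straddles lt p C}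

theorem straddlingSmallCopoints_ssubset {lt' : X → X → Prop} [IsStrictTotalOrder X lt']
    (hC : C ∈ straddlingSmallCopoints d lt p) (hleft : ∀ c ∈ C, lt' c p)
    (hsame : ∀ x ∉ C, (lt' x p ↔ lt x p) ∧ (lt' p x ↔ lt p x)) :
    straddlingSmallCopoints d lt' p ⊂ straddlingSmallCopoints d lt p := by
  have hC' : C ∉ straddlingSmallCopoints d lt' p :=
    fun ⟨_, _, _, u, hu, hpu⟩ => asymm_of lt' (hleft u hu) hpu
  refine ⟨fun D hD' => ?_, fun h => hC' (h hC)⟩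
  obtain ⟨hD, hsmall, ⟨u, hu, hup⟩, v, hv, hpv⟩ := hD'
  have hDC : ∀ w ∈ D, w ∉ C := fun w hwD hwC =>
    hC' (hC.1.eq_of_mem hD hwC hwD ▸ ⟨hD, hsmall, ⟨u, hu, hup⟩, v, hv, hpv⟩)
  exact ⟨hD, hsmall, ⟨u, hu, (hsame u (hDC u hu)).1.1 hup⟩, v, hv, (hsame v (hDC v hv)).2.1 hpv⟩

theorem exists_compatible_straddlingSmallCopoints_eq_empty [Finite X]
    (hsymm : ∀ x y : X, d x y = d y x)
    (hRobinson : ∃ lt : X → X → Prop, IsStrictTotalOrder X lt ∧ IsCompatible d lt) (p : X) :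
    ∃ lt : X → X → Prop, IsStrictTotalOrder X lt ∧ IsCompatible d lt ∧
      straddlingSmallCopoints d lt p = ∅ := by
  obtain ⟨lt, ⟨hSTO, hcomp⟩, hmin⟩ :=
    (measure fun lt => (straddlingSmallCopoints d lt p).ncard).wf.has_min _ hRobinson
  refine ⟨lt, hSTO, hcomp, Set.eq_empty_iff_forall_notMem.2 fun C hC => ?_⟩
  have ⟨hcop, hsmall, ⟨c, hc, hcp⟩, _⟩ := hC
  have hδ : ∀ x ∈ C, d p x = d p c := fun x hx => hcop.1 p hcop.2.1 x hx c hc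
  obtain ⟨lt', hSTO', hcomp', hleft, hsame⟩ := hcop.1.exists_compatible_shift_left hsymm hcomp
    hcop.2.1 hδ (fun x hx y hy => (hsmall x hx y hy).trans_eq (hδ x hx)) ⟨c, hc, hcp⟩
  exact hmin lt' ⟨hSTO', hcomp'⟩
    (Set.ncard_lt_ncard (straddlingSmallCopoints_ssubset hC hleft hsame))

end Robinson

theorem exists_compatible_order_copoints_general {X : Type*} [Fintype X] (d : X → X → ℝ)
    (hsymm : ∀ x y : X, d x y = d y x)
    (hRobinson : ∃ lt : X → X → Prop, IsStrictTotalOrder X lt ∧ IsCompatible d lt)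
    (p : X) :
    ∃ lt : X → X → Prop, IsStrictTotalOrder X lt ∧ IsCompatible d lt ∧
      ∀ C : Set X, IsCopoint d p C → ∀ δ : ℝ, (∀ x ∈ C, d p x = δ) →
        ((∀ x ∈ C, ∀ y ∈ C, d x y ≤ δ) →
          IsInterval lt C ∧ ((∀ u ∈ C, lt u p) ∨ (∀ u ∈ C, lt p u))) ∧
        ((∃ x ∈ C, ∃ y ∈ C, δ < d x y) →
          IsInterval lt {u ∈ C | lt u p} ∧ IsInterval lt {u ∈ C | lt p u}) := by
  obtain ⟨lt, hSTO, hcomp, hnone⟩ :=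
    exists_compatible_straddlingSmallCopoints_eq_empty hsymm hRobinson p
  refine ⟨lt, hSTO, hcomp, fun C hC δ hδ => ⟨fun hsmall => ?_,
    fun _ => ⟨hC.isInterval_left hsymm hcomp, hC.isInterval_right hsymm hcomp⟩⟩⟩
  have hside := forall_lt_or_forall_gt_of_not_straddles hC.2.1 fun hstr =>
    Set.eq_empty_iff_forall_notMem.1 hnone C
      ⟨hC, fun x hx y hy => (hsmall x hx y hy).trans_eq (hδ x hx).symm, hstr⟩
  exact ⟨hC.isInterval_of_side hsymm hcomp hside, hside⟩

/-- in a Robinson space `(X,d)` with a point `p`, there is a compatible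
order `<` such that every copoint `C` at `p` with `diam(C) ≤ δ_C` is an interval of
`<` located entirely on one side of `p`, and every copoint `C` with `diam(C) > δ_C`
splits into the two intervals `C^l = {u ∈ C : u < p}` and `C^r = {u ∈ C : p < u}`
(with `C^l < p < C^r`). -/
theorem exists_compatible_order_copoints {X : Type*} [Fintype X] (d : X → X → ℝ)
    (hsymm : ∀ x y : X, d x y = d y x)
    (hnonneg : ∀ x y : X, 0 ≤ d x y)
    (hself : ∀ x : X, d x x = 0)
    (hRobinson : ∃ lt : X → X → Prop, IsStrictTotalOrder X lt ∧ IsCompatible d lt)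
    (p : X) :
    ∃ lt : X → X → Prop, IsStrictTotalOrder X lt ∧ IsCompatible d lt ∧
      ∀ C : Set X, IsCopoint d p C → ∀ δ : ℝ, (∀ x ∈ C, d p x = δ) →
        ((∀ x ∈ C, ∀ y ∈ C, d x y ≤ δ) →
          IsInterval lt C ∧ ((∀ u ∈ C, lt u p) ∨ (∀ u ∈ C, lt p u))) ∧
        ((∃ x ∈ C, ∃ y ∈ C, δ < d x y) →
          IsInterval lt {u ∈ C | lt u p} ∧ IsInterval lt {u ∈ C | lt p u}) :=
  exists_compatible_order_copoints_general d hsymm hRobinson p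
end
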